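/- arXiv:2605.22970 — 8 statements merged into one kernel-verified Lean document; each statement's English description precedes it below -/
import Mathlib

section
/- Let I be an ideal of A and let p ∈ K^n be a point such that F(p) ≠ 0 for some polynomial F ∈ I (i.e., p does not lie on the affine variety V(I)). Then for every vector (u_1, …, u_n) ∈ K^n there exists a derivation D ∈ W_n such that D(I) ⊆ I and, for each i = 1, …, n, the polynomial D(x_i) evaluated at p equals u_i. -/
open MvPolynomial

/-- `Wn K n` is the Lie algebra of all `K`-derivations of the polynomial ring
`K[x_1, …, x_n]`, realized as `Derivation K (MvPolynomial (Fin n) K) (MvPolynomial (Fin n) K)`. -/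
abbrev Wn (K : Type) [Field K] (n : ℕ) :=
  Derivation K (MvPolynomial (Fin n) K) (MvPolynomial (Fin n) K)

/-- If `p ∈ Kⁿ` does not lie on the variety of the ideal `I` (witnessed by `F ∈ I` with
`F(p) ≠ 0`), then for every vector `u ∈ Kⁿ` there is a derivation `D` with `D(I) ⊆ I`
and `D(xᵢ)(p) = uᵢ` for all `i`. -/
theorem exists_derivation_preserving_ideal_with_prescribed_values_at_point
    {K : Type} [Field K] [IsAlgClosed K] [CharZero K] {n : ℕ}
    (I : Ideal (MvPolynomial (Fin n) K)) (p : Fin n → K)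
    (F : MvPolynomial (Fin n) K) (hFI : F ∈ I) (hFp : MvPolynomial.eval p F ≠ 0)
    (u : Fin n → K) :
    ∃ D : Wn K n,
      (∀ f ∈ I, D f ∈ I) ∧
      (∀ i : Fin n, MvPolynomial.eval p (D (MvPolynomial.X i)) = u i) := by
  set D₀ : Wn K n := MvPolynomial.mkDerivation K
    (fun i => MvPolynomial.C (u i / MvPolynomial.eval p F)) with hD₀
  refine ⟨F • D₀, ?_, ?_⟩
  · intro f hf
    have : (F • D₀) f = F * D₀ f := rfl
    rw [this]
    exact I.mul_mem_right _ hFI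
  · intro i
    have : (F • D₀) (MvPolynomial.X i) = F * MvPolynomial.C (u i / MvPolynomial.eval p F) := by
      show F * D₀ (MvPolynomial.X i) = _
      rw [hD₀, MvPolynomial.mkDerivation_X]
    rw [this, map_mul, MvPolynomial.eval_C]
    field_simp
end

section
/- Let M be a nonzero maximal subalgebra of the Lie algebra W_n with rk_A(M) < n, i.e., any n elements of M are linearly dependent over A. Then the only ideals I of A satisfying D(I) ⊆ I for all D ∈ M are the zero ideal and A itself. -/
/-!
The derivations preserving `I` form a Lie subalgebra containing `M`. If it is all of `W_n`, then
`I` is stable under every `∂/∂xᵢ`; in characteristic zero some partial derivative of a nonzero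
element of `I` of positive degree is nonzero of smaller degree, so `I` contains a nonzero constant
and `I = A`. Otherwise maximality forces the stabilizer to be `M`; but for `0 ≠ g ∈ I` it contains
`g ∂/∂x₁, …, g ∂/∂xₙ`, which are `A`-linearly independent, contradicting `rk_A M < n`.
-/

open MvPolynomial

namespace MvPolynomial

variable {R σ : Type*}

theorem totalDegree_pderiv_lt [CommSemiring R] {i : σ} {f : MvPolynomial σ R}
    (h : pderiv i f ≠ 0) : (pderiv i f).totalDegree < f.totalDegree := by
  have hpos : 0 < f.totalDegree := by
    refine Nat.pos_of_ne_zero fun h0 => h ?_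
    rw [totalDegree_eq_zero_iff_eq_C] at h0
    rw [h0, pderiv_C]
  rw [totalDegree, Finset.sup_lt_iff hpos]
  intro m hm
  rw [mem_support_iff, coeff_pderiv] at hm
  have hdeg := le_totalDegree (mem_support_iff.mpr (left_ne_zero_of_mul hm))
  rw [Finsupp.sum_add_index' (fun _ => rfl) (fun _ _ _ => rfl),
    Finsupp.sum_single_index rfl] at hdeg
  omega

theorem exists_pderiv_ne_zero [CommSemiring R] [NoZeroDivisors R] [CharZero R]
    {f : MvPolynomial σ R} (hf : f.totalDegree ≠ 0) : ∃ i, pderiv i f ≠ 0 := by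
  contrapose! hf
  refine (totalDegree_eq_zero_iff _ f).mpr fun m hm i => ?_
  by_contra hmi
  have hcoeff := coeff_pderiv (i := i) f (m - Finsupp.single i 1)
  rw [hf i, tsub_add_cancel_of_le (Finsupp.single_le_iff.mpr (Nat.one_le_iff_ne_zero.mpr hmi)),
    coeff_zero, eq_comm, mul_eq_zero] at hcoeff
  exact hcoeff.elim (mem_support_iff.mp hm) (Nat.cast_add_one_ne_zero _)

theorem linearIndependent_smul_pderiv [CommRing R] [IsDomain R] {g : MvPolynomial σ R}
    (hg : g ≠ 0) : LinearIndependent (MvPolynomial σ R) fun i : σ => g • pderiv (R := R) i := by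
  classical
  let evalX : Derivation R (MvPolynomial σ R) (MvPolynomial σ R) →ₗ[MvPolynomial σ R]
      σ → MvPolynomial σ R :=
    { toFun := fun D j => D (X j), map_add' := fun _ _ => rfl, map_smul' := fun _ _ => rfl }
  have hcomp : evalX ∘ (fun i : σ => g • pderiv (R := R) i) = fun i => Pi.single i g := by
    ext i j
    simp [evalX, pderiv_X, Pi.single_apply]
  refine .of_comp evalX ?_
  rw [hcomp]
  exact Pi.linearIndependent_single_of_ne_zero fun _ => hg

end MvPolynomial

theorem Ideal.eq_top_of_forall_pderiv_mem {K σ : Type*} [Field K] [CharZero K]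
    {I : Ideal (MvPolynomial σ K)} (hI : ∀ i, ∀ f ∈ I, pderiv i f ∈ I) (hne : I ≠ ⊥) :
    I = ⊤ := by
  obtain ⟨f, hfI, hf0⟩ := Submodule.exists_mem_ne_zero_of_ne_bot hne
  induction hd : f.totalDegree using Nat.strong_induction_on generalizing f with
  | _ d ih =>
    by_cases hdeg : f.totalDegree = 0
    · rw [totalDegree_eq_zero_iff_eq_C] at hdeg
      have hc : coeff 0 f ≠ 0 := fun h => hf0 (by rw [hdeg, h, map_zero])
      exact I.eq_top_of_isUnit_mem hfI (hdeg ▸ hc.isUnit.map C)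
    · obtain ⟨i, hi⟩ := exists_pderiv_ne_zero hdeg
      exact ih _ (hd ▸ totalDegree_pderiv_lt hi) _ (hI i f hfI) hi rfl

namespace Ideal

variable (R : Type*) {A : Type*} [CommRing R] [CommRing A] [Algebra R A] (I : Ideal A)

def derivationStabilizer : LieSubalgebra R (Derivation R A A) where
  carrier := {D | ∀ f ∈ I, D f ∈ I}
  add_mem' h₁ h₂ f hf := I.add_mem (h₁ f hf) (h₂ f hf)
  zero_mem' _ _ := I.zero_mem
  smul_mem' c D hD f hf := by
    rw [Derivation.smul_apply, ← algebraMap_smul A c (D f)]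
    exact I.smul_mem _ (hD f hf)
  lie_mem' h₁ h₂ f hf := by
    rw [Derivation.commutator_apply]
    exact I.sub_mem (h₁ _ (h₂ f hf)) (h₂ _ (h₁ f hf))

variable {R I}

theorem mem_derivationStabilizer {D : Derivation R A A} :
    D ∈ I.derivationStabilizer R ↔ ∀ f ∈ I, D f ∈ I :=
  Iff.rfl

theorem smul_mem_derivationStabilizer {g : A} (hg : g ∈ I) (D : Derivation R A A) :
    g • D ∈ I.derivationStabilizer R :=
  fun _ _ => I.mul_mem_right _ hg

end Ideal

theorem maximal_subalgebra_rank_lt_no_invariant_ideals_general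
    {K : Type} [Field K] [CharZero K] {n : ℕ}
    (M : LieSubalgebra K (Wn K n))
    (hmax : ∀ L : LieSubalgebra K (Wn K n), M < L → L = ⊤)
    (hrk : ∀ v : Fin n → Wn K n, (∀ i, v i ∈ M) →
      ¬ LinearIndependent (MvPolynomial (Fin n) K) v)
    (I : Ideal (MvPolynomial (Fin n) K))
    (hI : ∀ D ∈ M, ∀ f ∈ I, D f ∈ I) :
    I = ⊥ ∨ I = ⊤ := by
  rcases eq_or_ne I ⊥ with hbot | hne
  · exact Or.inl hbot
  obtain ⟨g, hgI, hg0⟩ := Submodule.exists_mem_ne_zero_of_ne_bot hne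
  have hlt : M < I.derivationStabilizer K := by
    refine lt_of_le_of_ne hI fun hM => hrk _ (fun i => ?_) (linearIndependent_smul_pderiv hg0)
    exact hM ▸ Ideal.smul_mem_derivationStabilizer hgI _
  have htop := hmax _ hlt
  refine Or.inr (Ideal.eq_top_of_forall_pderiv_mem (fun i => ?_) hne)
  exact Ideal.mem_derivationStabilizer.mp (htop ▸ LieSubalgebra.mem_top (pderiv i))

/-- If `M` is a nonzero maximal Lie subalgebra of `Wn` of rank `< n` over
`A = K[x_1,…,x_n]` (i.e. any `n` of its elements are `A`-linearly dependent),
then the only ideals of `A` invariant under every derivation in `M` are `0` and `A`. -/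
theorem maximal_subalgebra_rank_lt_no_invariant_ideals
    {K : Type} [Field K] [IsAlgClosed K] [CharZero K] {n : ℕ}
    (M : LieSubalgebra K (Wn K n))
    (hM0 : M ≠ ⊥) (hMtop : M ≠ ⊤)
    (hmax : ∀ L : LieSubalgebra K (Wn K n), M < L → L = ⊤)
    (hrk : ∀ v : Fin n → Wn K n, (∀ i, v i ∈ M) →
      ¬ LinearIndependent (MvPolynomial (Fin n) K) v)
    (I : Ideal (MvPolynomial (Fin n) K))
    (hI : ∀ D ∈ M, ∀ f ∈ I, D f ∈ I) :
    I = ⊥ ∨ I = ⊤ :=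
  maximal_subalgebra_rank_lt_no_invariant_ideals_general M hmax hrk I hI
end

section
/- Let D be a simple derivation of the polynomial ring A = K[x_1,…,x_n]. Then A·D = { f·D : f ∈ A } is maximal among the Lie subalgebras of W_n of rank 1 over A: if M is a Lie subalgebra of W_n with rk_A(M) = 1 (any two elements of M are linearly dependent over A) and A·D ⊆ M, then M = A·D. -/
open MvPolynomial

/-- If `D` is a simple derivation of `A = K[x_1,…,x_n]`, then `A·D` is maximal among
the Lie subalgebras of `Wn` of rank `1` over `A`: if `M` is a Lie subalgebra of rank `1`
(nonzero and any two of its elements are `A`-linearly dependent) containing `A·D`,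
then `M = A·D`. -/
theorem aD_maximal_among_rank_one_subalgebras
    {K : Type} [Field K] [IsAlgClosed K] [CharZero K] {n : ℕ}
    (D : Wn K n)
    (hD : ∀ I : Ideal (MvPolynomial (Fin n) K), (∀ f ∈ I, D f ∈ I) → I = ⊥ ∨ I = ⊤)
    (M : LieSubalgebra K (Wn K n)) (hM0 : M ≠ ⊥)
    (hrk : ∀ v : Fin 2 → Wn K n, (∀ i, v i ∈ M) →
      ¬ LinearIndependent (MvPolynomial (Fin n) K) v)
    (hAD : ∀ f : MvPolynomial (Fin n) K, f • D ∈ M) :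
    ∀ T ∈ M, ∃ f : MvPolynomial (Fin n) K, f • D = T := by
  classical
  intro T hT
  have hDM : D ∈ M := by simpa using hAD 1
  have hdep := hrk ![T, D] (by
    intro i
    fin_cases i <;> simpa)
  rw [Fintype.not_linearIndependent_iff] at hdep
  obtain ⟨g, hsum, i, hi⟩ := hdep
  rw [Fin.sum_univ_two] at hsum
  simp only [Matrix.cons_val_zero, Matrix.cons_val_one, Matrix.head_cons] at hsum
  by_cases h0 : g 0 = 0
  · -- then g 1 ≠ 0 and D = 0
    have h1 : g 1 ≠ 0 := by
      fin_cases i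
      · exact absurd h0 hi
      · exact hi
    have hD0 : ∀ f, D f = 0 := by
      intro f
      have h : (g 0 • T + g 1 • D) f = (0 : Wn K n) f := by rw [hsum]
      simp only [h0, zero_smul, zero_add, Derivation.coe_smul, Pi.smul_apply,
        Derivation.coe_zero, Pi.zero_def] at h
      have : g 1 * D f = 0 := by simpa [smul_eq_mul] using h
      rcases mul_eq_zero.mp this with h' | h'
      · exact absurd h' h1
      · exact h'
    rcases n with _ | m
    · -- n = 0 : every derivation vanishes
      refine ⟨0, ?_⟩
      ext j
      exact absurd j.2 (Nat.not_lt_zero _)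
    · -- n > 0 : contradiction from the ideal (X 0)
      exfalso
      have := hD (Ideal.span {X (0 : Fin (m + 1))}) (by
        intro f _
        rw [hD0]
        exact Ideal.zero_mem _)
      rcases this with h | h
      · have : (X (0 : Fin (m + 1)) : MvPolynomial (Fin (m + 1)) K) = 0 := by
          have hmem : (X (0 : Fin (m + 1)) : MvPolynomial (Fin (m + 1)) K)
              ∈ Ideal.span {X (0 : Fin (m + 1))} := Ideal.subset_span rfl
          rw [h] at hmem
          exact Ideal.mem_bot.mp hmem
        exact MvPolynomial.X_ne_zero _ this
      · have hu : IsUnit (X (0 : Fin (m + 1)) : MvPolynomial (Fin (m + 1)) K) :=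
          (Ideal.span_singleton_eq_top).mp h
        obtain ⟨v, hv⟩ := hu.exists_right_inv
        have := congrArg constantCoeff hv
        simp at this
  · -- g 0 ≠ 0 : g 0 • T = (- g 1) • D
    have hrel : ∀ f, g 0 * T f = (-(g 1)) * D f := by
      intro f
      have h : (g 0 • T + g 1 • D) f = (0 : Wn K n) f := by rw [hsum]
      simp only [Derivation.coe_add, Derivation.coe_smul, Pi.add_apply, Pi.smul_apply,
        Derivation.coe_zero, Pi.zero_def, smul_eq_mul] at h
      linear_combination h
    obtain ⟨a', b', c', hcop, hca, hcb⟩ :=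
      UniqueFactorizationMonoid.exists_reduced_factors (g 0) h0 (-(g 1))
    have hc' : c' ≠ 0 := fun h => h0 (by rw [← hca, h, zero_mul])
    have ha' : a' ≠ 0 := fun h => h0 (by rw [← hca, h, mul_zero])
    have hrel' : ∀ f, a' * T f = b' * D f := by
      intro f
      have h := hrel f
      rw [← hca, ← hcb] at h
      rw [mul_assoc, mul_assoc] at h
      exact mul_left_cancel₀ hc' h
    have hdvd : ∀ f, a' ∣ D f := by
      intro f
      exact hcop.dvd_of_dvd_mul_left ⟨T f, (hrel' f).symm⟩
    have := hD (Ideal.span {a'}) (by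
      intro f _
      exact Ideal.mem_span_singleton.mpr (hdvd f))
    rcases this with h | h
    · exact absurd (by
        have hmem : a' ∈ Ideal.span {a'} := Ideal.subset_span rfl
        rw [h] at hmem
        simpa using hmem) ha'
    · have hu : IsUnit a' := (Ideal.span_singleton_eq_top).mp h
      obtain ⟨v, hv⟩ := hu.exists_right_inv
      refine ⟨v * b', ?_⟩
      apply Derivation.ext
      intro f
      simp only [Derivation.coe_smul, Pi.smul_apply, smul_eq_mul]
      rw [mul_assoc, ← hrel' f, ← mul_assoc, mul_comm v a', hv, one_mul]
end

section
/- Let D_1, D_2 ∈ W_n be derivations that are linearly independent over A and satisfy [D_1, D_2] = μ_1·D_1 + μ_2·D_2 for some polynomials μ_1, μ_2 ∈ A. For 1 ≤ i, j ≤ n set Δ_{ij} = D_1(x_i)·D_2(x_j) − D_1(x_j)·D_2(x_i). Then for all i, j: D_1(Δ_{ij}) = μ_2·Δ_{ij} + Σ_{k=1}^n (∂/∂x_k D_1(x_i))·Δ_{kj} − Σ_{k=1}^n (∂/∂x_k D_1(x_j))·Δ_{ki}, and D_2(Δ_{ij}) = −μ_1·Δ_{ij} + Σ_{k=1}^n (∂/∂x_k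 D_2(x_i))·Δ_{kj} − Σ_{k=1}^n (∂/∂x_k D_2(x_j))·Δ_{ki}. Consequently, the ideal of A generated by all the polynomials Δ_{ij}, 1 ≤ i, j ≤ n, is invariant under both D_1 and D_2. -/
open MvPolynomial

lemma Wn.sum_apply {K : Type} [Field K] {n : ℕ} (g : Fin n → Wn K n)
    (x : MvPolynomial (Fin n) K) :
    (∑ k, g k) x = ∑ k, g k x := by
  have h : ⇑(∑ k, g k) = ∑ k, ⇑(g k) :=
    map_sum (Derivation.coeFnAddMonoidHom) g Finset.univ
  rw [h, Finset.sum_apply]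

lemma Wn.chain_rule {K : Type} [Field K] {n : ℕ} (D : Wn K n)
    (f : MvPolynomial (Fin n) K) :
    D f = ∑ k, MvPolynomial.pderiv k f * D (MvPolynomial.X k) := by
  have h : D = ∑ k, D (MvPolynomial.X k) • (MvPolynomial.pderiv k : Wn K n) := by
    apply MvPolynomial.derivation_ext
    intro i
    rw [Wn.sum_apply]
    classical
    simp [Derivation.smul_apply, MvPolynomial.pderiv_X, Pi.single_apply]
  conv_lhs => rw [h]
  rw [Wn.sum_apply]
  simp [Derivation.smul_apply, smul_eq_mul, mul_comm]

/-- For `A`-linearly independent derivations `D₁, D₂` with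
`[D₁, D₂] = μ₁·D₁ + μ₂·D₂`, the minors `Δᵢⱼ = D₁(xᵢ)D₂(xⱼ) − D₁(xⱼ)D₂(xᵢ)` satisfy the
stated derivative formulas, and the ideal generated by all the `Δᵢⱼ` is invariant under
both `D₁` and `D₂`. -/
theorem derivation_of_minors_and_invariant_ideal
    {K : Type} [Field K] [IsAlgClosed K] [CharZero K] {n : ℕ}
    (D₁ D₂ : Wn K n)
    (hind : LinearIndependent (MvPolynomial (Fin n) K) ![D₁, D₂])
    (μ₁ μ₂ : MvPolynomial (Fin n) K)
    (hbr : ⁅D₁, D₂⁆ = μ₁ • D₁ + μ₂ • D₂)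
    (Δ : Fin n → Fin n → MvPolynomial (Fin n) K)
    (hΔ : ∀ i j, Δ i j =
      D₁ (MvPolynomial.X i) * D₂ (MvPolynomial.X j)
        - D₁ (MvPolynomial.X j) * D₂ (MvPolynomial.X i)) :
    (∀ i j, D₁ (Δ i j) =
      μ₂ * Δ i j + (∑ k, MvPolynomial.pderiv k (D₁ (MvPolynomial.X i)) * Δ k j)
        - ∑ k, MvPolynomial.pderiv k (D₁ (MvPolynomial.X j)) * Δ k i) ∧
    (∀ i j, D₂ (Δ i j) =
      -μ₁ * Δ i j + (∑ k, MvPolynomial.pderiv k (D₂ (MvPolynomial.X i)) * Δ k j)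
        - ∑ k, MvPolynomial.pderiv k (D₂ (MvPolynomial.X j)) * Δ k i) ∧
    (∀ f ∈ Ideal.span (Set.range fun p : Fin n × Fin n => Δ p.1 p.2),
      D₁ f ∈ Ideal.span (Set.range fun p : Fin n × Fin n => Δ p.1 p.2) ∧
      D₂ f ∈ Ideal.span (Set.range fun p : Fin n × Fin n => Δ p.1 p.2)) := by
  set A := fun i => D₁ (MvPolynomial.X i) with hA
  set B := fun i => D₂ (MvPolynomial.X i) with hB
  -- bracket relation applied to X j
  have hb : ∀ j, D₁ (B j) = D₂ (A j) + μ₁ * A j + μ₂ * B j := by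
    intro j
    have h := congrArg (fun (D : Wn K n) => D (MvPolynomial.X j)) hbr
    simp only [Derivation.commutator_apply, Derivation.add_apply,
      Derivation.smul_apply, smul_eq_mul] at h
    linear_combination h
  -- expansion of sums of minors
  have expand : ∀ (P : Fin n → MvPolynomial (Fin n) K) (j : Fin n),
      ∑ k, P k * Δ k j
        = (∑ k, P k * A k) * B j - A j * ∑ k, P k * B k := by
    intro P j
    rw [Finset.sum_mul, Finset.mul_sum, ← Finset.sum_sub_distrib]
    exact Finset.sum_congr rfl fun k _ => by rw [hΔ]; ring
  have part1 : ∀ i j, D₁ (Δ i j) =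
      μ₂ * Δ i j + (∑ k, MvPolynomial.pderiv k (A i) * Δ k j)
        - ∑ k, MvPolynomial.pderiv k (A j) * Δ k i := by
    intro i j
    have c1 := Wn.chain_rule D₁ (A i)
    have c2 := Wn.chain_rule D₁ (A j)
    have c3 := Wn.chain_rule D₂ (A i)
    have c4 := Wn.chain_rule D₂ (A j)
    rw [expand (fun k => MvPolynomial.pderiv k (A i)) j,
      expand (fun k => MvPolynomial.pderiv k (A j)) i,
      hΔ i j, map_sub]
    simp only [Derivation.leibniz, smul_eq_mul]
    rw [hb j, hb i, c1, c2, c3, c4]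
    ring
  have part2 : ∀ i j, D₂ (Δ i j) =
      -μ₁ * Δ i j + (∑ k, MvPolynomial.pderiv k (B i) * Δ k j)
        - ∑ k, MvPolynomial.pderiv k (B j) * Δ k i := by
    intro i j
    have c1 := Wn.chain_rule D₂ (B i)
    have c2 := Wn.chain_rule D₂ (B j)
    have c3 := Wn.chain_rule D₁ (B i)
    have c4 := Wn.chain_rule D₁ (B j)
    have d1 : D₂ (A i) = D₁ (B i) - μ₁ * A i - μ₂ * B i := by
      rw [hb i]; ring
    have d2 : D₂ (A j) = D₁ (B j) - μ₁ * A j - μ₂ * B j := by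
      rw [hb j]; ring
    rw [expand (fun k => MvPolynomial.pderiv k (B i)) j,
      expand (fun k => MvPolynomial.pderiv k (B j)) i,
      hΔ i j, map_sub]
    simp only [Derivation.leibniz, smul_eq_mul]
    rw [d1, d2, c1, c2, c3, c4]
    ring
  refine ⟨part1, part2, ?_⟩
  set I := Ideal.span (Set.range fun p : Fin n × Fin n => Δ p.1 p.2) with hI
  have gen : ∀ i j, Δ i j ∈ I := fun i j =>
    Ideal.subset_span ⟨(i, j), rfl⟩
  have key : ∀ (D : Wn K n), (∀ i j, D (Δ i j) ∈ I) → ∀ f ∈ I, D f ∈ I := by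
    intro D hD f hf
    induction hf using Submodule.span_induction with
    | mem x hx => obtain ⟨p, rfl⟩ := hx; exact hD p.1 p.2
    | zero => simp
    | add x y _ _ hx hy => rw [map_add]; exact I.add_mem hx hy
    | smul a x hxI hx =>
      rw [smul_eq_mul, Derivation.leibniz, smul_eq_mul, smul_eq_mul]
      exact I.add_mem (Ideal.mul_mem_left I a hx) (Ideal.mul_mem_right (D a) I hxI)
  have memD : ∀ (D : Wn K n) (μ : MvPolynomial (Fin n) K) (P Q : Fin n → MvPolynomial (Fin n) K) (i j : Fin n),
      (∀ i j, D (Δ i j) = μ * Δ i j + (∑ k, P k * Δ k j) - ∑ k, Q k * Δ k i) → D (Δ i j) ∈ I := by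
    intro D μ P Q i j h
    rw [h i j]
    exact I.sub_mem (I.add_mem (Ideal.mul_mem_left I μ (gen i j))
        (Ideal.sum_mem I fun k _ => Ideal.mul_mem_left I _ (gen k j)))
      (Ideal.sum_mem I fun k _ => Ideal.mul_mem_left I _ (gen k i))
  intro f hf
  exact ⟨key D₁ (fun i j => by
      rw [part1 i j]
      exact I.sub_mem (I.add_mem (Ideal.mul_mem_left I μ₂ (gen i j))
          (Ideal.sum_mem I fun k _ => Ideal.mul_mem_left I _ (gen k j)))
        (Ideal.sum_mem I fun k _ => Ideal.mul_mem_left I _ (gen k i))) f hf,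
    key D₂ (fun i j => by
      rw [part2 i j]
      exact I.sub_mem (I.add_mem (Ideal.mul_mem_left I (-μ₁) (gen i j))
          (Ideal.sum_mem I fun k _ => Ideal.mul_mem_left I _ (gen k j)))
        (Ideal.sum_mem I fun k _ => Ideal.mul_mem_left I _ (gen k i))) f hf⟩
end

section
/- Let n = 2 and let D_1, D_2 ∈ W_2 be derivations of A = K[x_1,x_2] that are linearly independent over A and satisfy [D_1, D_2] = μ_1·D_1 + μ_2·D_2 for some polynomials μ_1, μ_2 ∈ A. Set Δ = D_1(x_1)·D_2(x_2) − D_1(x_2)·D_2(x_1). Then D_1(Δ) = (μ_2 + div D_1)·Δ and D_2(Δ) = (−μ_1 + div D_2)·Δ; in particular Δ is a common Darboux polynomial of D_1 and D_2. -/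
open MvPolynomial

/-- `W2 K` is the Lie algebra of all `K`-derivations of `K[x₁, x₂]`. -/
abbrev W2 (K : Type) [Field K] :=
  Derivation K (MvPolynomial (Fin 2) K) (MvPolynomial (Fin 2) K)

lemma W2_apply_eq {K : Type} [Field K] (D : W2 K) (f : MvPolynomial (Fin 2) K) :
    D f = D (X 0) * pderiv 0 f + D (X 1) * pderiv 1 f := by
  have h : D = D (X 0) • (pderiv 0 : W2 K) + D (X 1) • (pderiv 1 : W2 K) := by
    apply derivation_ext
    intro i
    fin_cases i <;> simp
  conv_lhs => rw [h]
  simp [smul_eq_mul]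

/-- For `A`-linearly independent derivations `D₁, D₂` of `A = K[x₁,x₂]` with
`[D₁, D₂] = μ₁·D₁ + μ₂·D₂`, the determinant `Δ = D₁(x₁)D₂(x₂) − D₁(x₂)D₂(x₁)` satisfies
`D₁(Δ) = (μ₂ + div D₁)·Δ` and `D₂(Δ) = (−μ₁ + div D₂)·Δ`; in particular `Δ` is a common
Darboux polynomial of `D₁` and `D₂`. -/
theorem determinant_is_common_darboux_polynomial
    {K : Type} [Field K] [IsAlgClosed K] [CharZero K]
    (D₁ D₂ : W2 K)
    (hind : LinearIndependent (MvPolynomial (Fin 2) K) ![D₁, D₂])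
    (μ₁ μ₂ : MvPolynomial (Fin 2) K)
    (hbr : ⁅D₁, D₂⁆ = μ₁ • D₁ + μ₂ • D₂)
    (Δ : MvPolynomial (Fin 2) K)
    (hΔ : Δ = D₁ (MvPolynomial.X 0) * D₂ (MvPolynomial.X 1)
        - D₁ (MvPolynomial.X 1) * D₂ (MvPolynomial.X 0)) :
    D₁ Δ = (μ₂ + (MvPolynomial.pderiv 0 (D₁ (MvPolynomial.X 0))
        + MvPolynomial.pderiv 1 (D₁ (MvPolynomial.X 1)))) * Δ ∧
    D₂ Δ = (-μ₁ + (MvPolynomial.pderiv 0 (D₂ (MvPolynomial.X 0))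
        + MvPolynomial.pderiv 1 (D₂ (MvPolynomial.X 1)))) * Δ := by
  set a1 := D₁ (X 0) with ha1
  set a2 := D₁ (X 1) with ha2
  set b1 := D₂ (X 0) with hb1
  set b2 := D₂ (X 1) with hb2
  -- bracket equations on X 0 and X 1
  have E1 : D₁ b1 - D₂ a1 = μ₁ * a1 + μ₂ * b1 := by
    have := congrArg (fun D : W2 K => D (X 0)) hbr
    simpa [Derivation.commutator_apply, smul_eq_mul] using this
  have E2 : D₁ b2 - D₂ a2 = μ₁ * a2 + μ₂ * b2 := by
    have := congrArg (fun D : W2 K => D (X 1)) hbr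
    simpa [Derivation.commutator_apply, smul_eq_mul] using this
  have F1 : D₁ a1 = a1 * pderiv 0 a1 + a2 * pderiv 1 a1 := W2_apply_eq D₁ a1
  have F2 : D₁ a2 = a1 * pderiv 0 a2 + a2 * pderiv 1 a2 := W2_apply_eq D₁ a2
  have F3 : D₂ a1 = b1 * pderiv 0 a1 + b2 * pderiv 1 a1 := W2_apply_eq D₂ a1
  have F4 : D₂ a2 = b1 * pderiv 0 a2 + b2 * pderiv 1 a2 := W2_apply_eq D₂ a2
  have F5 : D₁ b1 = a1 * pderiv 0 b1 + a2 * pderiv 1 b1 := W2_apply_eq D₁ b1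
  have F6 : D₁ b2 = a1 * pderiv 0 b2 + a2 * pderiv 1 b2 := W2_apply_eq D₁ b2
  have F7 : D₂ b1 = b1 * pderiv 0 b1 + b2 * pderiv 1 b1 := W2_apply_eq D₂ b1
  have F8 : D₂ b2 = b1 * pderiv 0 b2 + b2 * pderiv 1 b2 := W2_apply_eq D₂ b2
  have G1 : D₁ b1 = b1 * pderiv 0 a1 + b2 * pderiv 1 a1 + (μ₁ * a1 + μ₂ * b1) := by
    linear_combination E1 + F3
  have G2 : D₁ b2 = b1 * pderiv 0 a2 + b2 * pderiv 1 a2 + (μ₁ * a2 + μ₂ * b2) := by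
    linear_combination E2 + F4
  have H1 : D₂ a1 = a1 * pderiv 0 b1 + a2 * pderiv 1 b1 - (μ₁ * a1 + μ₂ * b1) := by
    linear_combination F5 - E1
  have H2 : D₂ a2 = a1 * pderiv 0 b2 + a2 * pderiv 1 b2 - (μ₁ * a2 + μ₂ * b2) := by
    linear_combination F6 - E2
  subst hΔ
  constructor
  · rw [map_sub, Derivation.leibniz, Derivation.leibniz, smul_eq_mul, smul_eq_mul,
      smul_eq_mul, smul_eq_mul]
    linear_combination a1 * G2 + b2 * F1 - a2 * G1 - b1 * F2
  · rw [map_sub, Derivation.leibniz, Derivation.leibniz, smul_eq_mul, smul_eq_mul,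
      smul_eq_mul, smul_eq_mul]
    linear_combination a1 * F8 + b2 * H1 - a2 * F7 - b1 * H2
end

section
/- Let M be a maximal subalgebra of the Lie algebra W_2 = Der_K(K[x,y]) with rk_A(M) = 1, i.e., M ≠ 0 and any two elements of M are linearly dependent over A = K[x,y]. Then there exists a simple derivation D of A such that M = A·D = { f·D : f ∈ A }. -/
/-!
Since `M` has rank one, any two of its elements are proportional over `A`, so dividing a nonzero
`T ∈ M` by the gcd of its coefficients `T x, T y` yields `D` with `M ⊆ A·D`. The subalgebra `A·D`
has rank one, hence is proper, and maximality gives `M = A·D`. If `I` were a nonzero proper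
`D`-invariant ideal, the derivations agreeing with a multiple of `D` modulo `I` would form a
subalgebra strictly containing `A·D` (it contains `I·W₂`) and still proper (it contains `∂x` and
`∂y` only if `1 ∈ I`), contradicting maximality.
-/

open MvPolynomial

namespace Derivation

variable {R A : Type*} [CommRing R] [CommRing A] [Algebra R A]

lemma smul_lie_smul (f g : A) (D : Derivation R A A) :
    ⁅f • D, g • D⁆ = (f * D g - g * D f) • D := by
  ext w
  simp only [commutator_apply, smul_apply, smul_eq_mul, leibniz]
  ring

def multiples (D : Derivation R A A) : LieSubalgebra R (Derivation R A A) :=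
  { (A ∙ D).restrictScalars R with
    lie_mem' := by
      rintro _ _ hf hg
      obtain ⟨f, rfl⟩ := Submodule.mem_span_singleton.1 hf
      obtain ⟨g, rfl⟩ := Submodule.mem_span_singleton.1 hg
      exact Submodule.mem_span_singleton.2 ⟨f * D g - g * D f, (smul_lie_smul f g D).symm⟩ }

lemma mem_multiples {D T : Derivation R A A} : T ∈ multiples D ↔ ∃ f : A, f • D = T :=
  Submodule.mem_span_singleton

def multiplesMod (D : Derivation R A A) (I : Ideal A) (hI : ∀ f ∈ I, D f ∈ I) :
    LieSubalgebra R (Derivation R A A) where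
  carrier := {T | ∃ f : A, ∀ w, T w - f * D w ∈ I}
  zero_mem' := ⟨0, fun w => by simp⟩
  add_mem' := by
    rintro T S ⟨f, hf⟩ ⟨g, hg⟩
    refine ⟨f + g, fun w => ?_⟩
    convert I.add_mem (hf w) (hg w) using 1
    rw [add_apply]; ring
  smul_mem' := by
    rintro c T ⟨f, hf⟩
    refine ⟨algebraMap R A c * f, fun w => ?_⟩
    convert I.mul_mem_left (algebraMap R A c) (hf w) using 1
    rw [smul_apply, Algebra.smul_def]; ring
  lie_mem' := by
    rintro T S ⟨f, hf⟩ ⟨g, hg⟩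
    refine ⟨f * D g - g * D f, fun w => ?_⟩
    -- `D` preserves `I`, so `S w ≡ g * D w` gives `D (S w) ≡ D (g * D w)` modulo `I`.
    have hDS := hI _ (hg w)
    have hDT := hI _ (hf w)
    simp only [map_sub, leibniz, smul_eq_mul] at hDS hDT
    convert I.sub_mem (I.add_mem (I.sub_mem (hf (S w)) (hg (T w))) (I.mul_mem_left f hDS))
      (I.mul_mem_left g hDT) using 1
    rw [commutator_apply]; ring

variable {D : Derivation R A A} {I : Ideal A} {hI : ∀ f ∈ I, D f ∈ I}

lemma multiples_le_multiplesMod : multiples D ≤ multiplesMod D I hI := by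
  rintro _ hT
  obtain ⟨f, rfl⟩ := mem_multiples.1 hT
  exact ⟨f, fun w => by simp [smul_apply]⟩

lemma smul_mem_multiplesMod {a : A} (ha : a ∈ I) (E : Derivation R A A) :
    a • E ∈ multiplesMod D I hI :=
  ⟨0, fun w => by simpa [smul_apply] using I.mul_mem_right (E w) ha⟩

lemma mul_eq_mul_of_not_linearIndependent [IsDomain A] {S T : Derivation R A A}
    (h : ¬ LinearIndependent A ![S, T]) (a b : A) : S a * T b = S b * T a := by
  rw [LinearIndependent.pair_iff] at h
  push Not at h
  obtain ⟨s, t, hst, hne⟩ := h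
  have ha : s * S a + t * T a = 0 := by simpa using congr($hst a)
  have hb : s * S b + t * T b = 0 := by simpa using congr($hst b)
  rw [← sub_eq_zero]
  by_cases hs : s = 0
  · refine (mul_eq_zero.1 ?_).resolve_left (hne hs)
    linear_combination S a * hb - S b * ha
  · refine (mul_eq_zero.1 ?_).resolve_left hs
    linear_combination T b * ha - T a * hb

end Derivation

theorem IsRelPrime.exists_eq_mul_of_mul_eq_mul {α : Type*} [CommRing α] [IsDomain α]
    [DecompositionMonoid α] {p q s t : α} (h : IsRelPrime p q) (hst : s * q = t * p) :
    ∃ c, s = c * p ∧ t = c * q := by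
  by_cases hp : p = 0
  · subst hp
    obtain ⟨u, rfl⟩ := isRelPrime_zero_left.1 h
    rw [mul_zero, Units.mul_left_eq_zero] at hst
    exact ⟨t * ↑u⁻¹, by simp [hst], by simp [mul_assoc]⟩
  · obtain ⟨c, rfl⟩ := h.dvd_of_dvd_mul_right (hst ▸ dvd_mul_left p t)
    refine ⟨c, mul_comm p c, mul_left_cancel₀ hp ?_⟩
    linear_combination -hst

namespace MvPolynomial

open Derivation

section

variable {σ R : Type*} [CommRing R] {D : Derivation R (MvPolynomial σ R) (MvPolynomial σ R)}

lemma eq_zero_of_smul_pderiv_mem_multiples [IsDomain R] {a : MvPolynomial σ R} {i j : σ}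
    (hij : i ≠ j) (hi : a • pderiv i ∈ multiples D) (hj : a • pderiv j ∈ multiples D) :
    a = 0 := by
  obtain ⟨f, hf⟩ := mem_multiples.1 hi
  obtain ⟨g, hg⟩ := mem_multiples.1 hj
  have hfi : f * D (X i) = a := by simpa [Derivation.smul_apply] using congr($hf (X i))
  have hfj : f * D (X j) = 0 := by
    simpa [Derivation.smul_apply, pderiv_X_of_ne hij.symm] using congr($hf (X j))
  have hgj : g * D (X j) = a := by simpa [Derivation.smul_apply] using congr($hg (X j))
  rcases mul_eq_zero.1 hfj with h | h
  · rw [← hfi, h, zero_mul]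
  · rw [← hgj, h, mul_zero]

variable [Nontrivial σ]

lemma multiples_ne_top [IsDomain R] (D : Derivation R (MvPolynomial σ R) (MvPolynomial σ R)) :
    multiples D ≠ ⊤ := by
  obtain ⟨i, j, hij⟩ := exists_pair_ne σ
  intro h
  exact one_ne_zero <|
    eq_zero_of_smul_pderiv_mem_multiples (D := D) (a := 1) hij (by simp [h]) (by simp [h])

lemma multiples_lt_multiplesMod [IsDomain R] {I : Ideal (MvPolynomial σ R)}
    (hI : ∀ f ∈ I, D f ∈ I) (hI0 : I ≠ ⊥) : multiples D < multiplesMod D I hI := by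
  obtain ⟨i, j, hij⟩ := exists_pair_ne σ
  obtain ⟨a, ha, ha0⟩ := Submodule.exists_mem_ne_zero_of_ne_bot hI0
  refine multiples_le_multiplesMod.lt_of_not_ge fun hle => ha0 ?_
  exact eq_zero_of_smul_pderiv_mem_multiples hij (hle (smul_mem_multiplesMod ha _))
    (hle (smul_mem_multiplesMod ha _))

lemma eq_top_of_multiplesMod_eq_top {I : Ideal (MvPolynomial σ R)} {hI : ∀ f ∈ I, D f ∈ I}
    (h : multiplesMod D I hI = ⊤) : I = ⊤ := by
  obtain ⟨i, j, hij⟩ := exists_pair_ne σ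
  obtain ⟨f, hf⟩ : pderiv i ∈ multiplesMod D I hI := h ▸ LieSubalgebra.mem_top _
  obtain ⟨g, hg⟩ : pderiv j ∈ multiplesMod D I hI := h ▸ LieSubalgebra.mem_top _
  have hfi : 1 - f * D (X i) ∈ I := by simpa using hf (X i)
  have hfj : f * D (X j) ∈ I := by simpa [pderiv_X_of_ne hij.symm] using hf (X j)
  have hgi : g * D (X i) ∈ I := by simpa [pderiv_X_of_ne hij] using hg (X i)
  have hgj : 1 - g * D (X j) ∈ I := by simpa using hg (X j)
  rw [Ideal.eq_top_iff_one]
  convert I.add_mem (I.add_mem hfi (I.mul_mem_left (f * D (X i)) hgj))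
    (I.mul_mem_left (g * D (X i)) hfj) using 1
  ring

end

lemma exists_forall_mem_multiples {R : Type*} [CommRing R] [IsDomain R]
    [UniqueFactorizationMonoid R]
    {T : Derivation R (MvPolynomial (Fin 2) R) (MvPolynomial (Fin 2) R)} (hT : T ≠ 0) :
    ∃ D, ∀ S : Derivation R (MvPolynomial (Fin 2) R) (MvPolynomial (Fin 2) R),
      S (X 0) * T (X 1) = S (X 1) * T (X 0) → S ∈ multiples D := by
  have hT' : T (X 0) ≠ 0 ∨ T (X 1) ≠ 0 := by
    by_contra! h
    exact hT (derivation_ext fun i => by fin_cases i <;> simp [h])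
  obtain ⟨p, q, d, hpq, hp, hq⟩ :
      ∃ p q d, IsRelPrime p q ∧ d * p = T (X 0) ∧ d * q = T (X 1) :=
    hT'.elim (fun h => UniqueFactorizationMonoid.exists_reduced_factors _ h _)
      (fun h => UniqueFactorizationMonoid.exists_reduced_factors' _ _ h)
  have hd : d ≠ 0 := by
    rintro rfl
    simp only [zero_mul] at hp hq
    exact hT'.elim (· hp.symm) (· hq.symm)
  refine ⟨mkDerivation R ![p, q], fun S hS => ?_⟩
  obtain ⟨c, hc0, hc1⟩ := hpq.exists_eq_mul_of_mul_eq_mul (s := S (X 0)) (t := S (X 1))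
    (mul_left_cancel₀ hd (by rw [← hp, ← hq] at hS; linear_combination hS))
  refine mem_multiples.2 ⟨c, derivation_ext fun i => ?_⟩
  fin_cases i <;> simp [Derivation.smul_apply, hc0, hc1]

end MvPolynomial

theorem maximal_rank_one_subalgebra_eq_aD_general
    {K : Type} [Field K]
    (M : LieSubalgebra K (W2 K))
    (hM0 : M ≠ ⊥)
    (hmax : ∀ L : LieSubalgebra K (W2 K), M < L → L = ⊤)
    (hrk : ∀ v : Fin 2 → W2 K, (∀ i, v i ∈ M) →
      ¬ LinearIndependent (MvPolynomial (Fin 2) K) v) :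
    ∃ D : W2 K,
      (∀ I : Ideal (MvPolynomial (Fin 2) K), (∀ f ∈ I, D f ∈ I) → I = ⊥ ∨ I = ⊤) ∧
      (M : Set (W2 K)) = {T | ∃ f : MvPolynomial (Fin 2) K, f • D = T} := by
  obtain ⟨T, hTM, hT0⟩ : ∃ T ∈ M, T ≠ 0 := by simpa [LieSubalgebra.eq_bot_iff] using hM0
  obtain ⟨D, hD⟩ := exists_forall_mem_multiples hT0
  have hle : M ≤ D.multiples := fun S hS => hD S <|
    Derivation.mul_eq_mul_of_not_linearIndependent
      (hrk ![S, T] (Fin.forall_fin_two.2 ⟨hS, hTM⟩)) _ _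
  have hMD : M = D.multiples := hle.eq_of_not_lt fun hlt => multiples_ne_top D (hmax _ hlt)
  refine ⟨D, fun I hI => or_iff_not_imp_left.2 fun hI0 => ?_, ?_⟩
  · exact eq_top_of_multiplesMod_eq_top (hmax _ (hMD ▸ multiples_lt_multiplesMod hI hI0))
  · ext S
    rw [hMD]
    exact Derivation.mem_multiples

/-- Every maximal Lie subalgebra `M` of `W₂` of rank `1` over `A = K[x, y]`
(`M ≠ 0` and any two of its elements are `A`-linearly dependent) is of the form
`M = A·D` for some simple derivation `D` of `A`. -/
theorem maximal_rank_one_subalgebra_eq_aD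
    {K : Type} [Field K] [IsAlgClosed K] [CharZero K]
    (M : LieSubalgebra K (W2 K))
    (hM0 : M ≠ ⊥) (hMtop : M ≠ ⊤)
    (hmax : ∀ L : LieSubalgebra K (W2 K), M < L → L = ⊤)
    (hrk : ∀ v : Fin 2 → W2 K, (∀ i, v i ∈ M) →
      ¬ LinearIndependent (MvPolynomial (Fin 2) K) v) :
    ∃ D : W2 K,
      (∀ I : Ideal (MvPolynomial (Fin 2) K), (∀ f ∈ I, D f ∈ I) → I = ⊥ ∨ I = ⊤) ∧
      (M : Set (W2 K)) = {T | ∃ f : MvPolynomial (Fin 2) K, f • D = T} :=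
  maximal_rank_one_subalgebra_eq_aD_general M hM0 hmax hrk
end

section
/- Let n ≥ 2 and let M be a maximal subalgebra of the Lie algebra W_n that is finite dimensional as a K-vector space. Then M is not a solvable Lie algebra. -/
open MvPolynomial

/-!
By Lie's theorem a finite-dimensional solvable `M` has a common eigenvector `D` for its adjoint
action, so `M` lies in the normalizer of the line `A • D`. That normalizer contains the
infinite-dimensional space `A • D`, hence strictly contains `M`, and maximality makes it all of
`W_n`. But for `n ≥ 2` no nonzero derivation spans a line normalized by all of `W_n`.
-/

namespace Derivation

section CommRing

variable {R A : Type*} [CommRing R] [CommRing A] [Algebra R A]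

lemma lie_smul_eq_smul_lie_add (E D : Derivation R A A) (f : A) :
    ⁅E, f • D⁆ = f • ⁅E, D⁆ + E f • D := by
  ext a
  simp only [commutator_apply, add_apply, smul_apply, smul_eq_mul, leibniz]
  ring

lemma smul_lie_eq_smul_lie_sub (E D : Derivation R A A) (f : A) :
    ⁅f • E, D⁆ = f • ⁅E, D⁆ - D f • E := by
  ext a
  simp only [commutator_apply, sub_apply, smul_apply, smul_eq_mul, leibniz]
  ring

/-- The normalizer of the `A`-line `A • D`. -/
def lineNormalizer (D : Derivation R A A) : LieSubalgebra R (Derivation R A A) where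
  carrier := {E | ∃ f : A, ⁅E, D⁆ = f • D}
  add_mem' := by
    rintro E F ⟨f, hf⟩ ⟨g, hg⟩
    exact ⟨f + g, by rw [add_lie, hf, hg, add_smul]⟩
  zero_mem' := ⟨0, by rw [zero_lie, zero_smul]⟩
  smul_mem' := by
    rintro c E ⟨f, hf⟩
    exact ⟨c • f, by rw [smul_lie, hf, smul_assoc]⟩
  lie_mem' := by
    rintro E F ⟨f, hf⟩ ⟨g, hg⟩
    refine ⟨E g - F f, ?_⟩
    rw [lie_lie, hf, hg, lie_smul_eq_smul_lie_add, lie_smul_eq_smul_lie_add, hf, hg, sub_smul,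
      smul_smul, smul_smul, mul_comm g f]
    abel

lemma mem_lineNormalizer {D E : Derivation R A A} :
    E ∈ lineNormalizer D ↔ ∃ f : A, ⁅E, D⁆ = f • D :=
  Iff.rfl

lemma smul_mem_lineNormalizer (D : Derivation R A A) (f : A) : f • D ∈ lineNormalizer D :=
  ⟨-D f, by rw [smul_lie_eq_smul_lie_sub, lie_self, smul_zero, zero_sub, neg_smul]⟩

lemma le_lineNormalizer_of_forall_lie_eq_smul {M : LieSubalgebra R (Derivation R A A)}
    {D : Derivation R A A} (h : ∀ E ∈ M, ∃ c : R, ⁅E, D⁆ = c • D) : M ≤ lineNormalizer D := by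
  intro E hE
  obtain ⟨c, hc⟩ := h E hE
  exact ⟨algebraMap R A c, by rw [hc, algebraMap_smul]⟩

lemma smul_left_injective [IsDomain A] {D : Derivation R A A} (hD : D ≠ 0) :
    Function.Injective fun f : A => f • D := by
  intro f g hfg
  obtain ⟨a, ha⟩ : ∃ a, D a ≠ 0 := by
    by_contra! h
    exact hD (Derivation.ext h)
  exact mul_right_cancel₀ ha (congr($hfg a))

end CommRing

section Field

variable {K A : Type*} [Field K] [CommRing A] [Algebra K A]

lemma not_lineNormalizer_le_of_finiteDimensional [IsDomain A] (hA : ¬ FiniteDimensional K A)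
    {D : Derivation K A A} (hD : D ≠ 0) (M : LieSubalgebra K (Derivation K A A))
    [FiniteDimensional K M] : ¬ lineNormalizer D ≤ M := by
  intro hle
  let mulD : A →ₗ[K] M :=
    { toFun := fun f => ⟨f • D, hle (smul_mem_lineNormalizer D f)⟩
      map_add' := fun f g => Subtype.ext (add_smul f g D)
      map_smul' := fun c f => Subtype.ext (smul_assoc c f D) }
  exact hA (.of_injective mulD fun f g hfg => smul_left_injective hD (congr_arg Subtype.val hfg))

variable [IsAlgClosed K] [CharZero K]

lemma exists_ne_zero_le_lineNormalizer [Nontrivial (Derivation K A A)]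
    (M : LieSubalgebra K (Derivation K A A)) [FiniteDimensional K M] [LieAlgebra.IsSolvable M] :
    ∃ D : Derivation K A A, D ≠ 0 ∧ M ≤ lineNormalizer D := by
  rcases subsingleton_or_nontrivial M with hM | hM
  · obtain ⟨D, hD⟩ := exists_ne (0 : Derivation K A A)
    refine ⟨D, hD, fun E hE => ?_⟩
    rw [show E = 0 from congr_arg Subtype.val (Subsingleton.elim (⟨E, hE⟩ : M) 0)]
    exact zero_mem _
  · obtain ⟨χ, hχ⟩ := LieModule.exists_nontrivial_weightSpace_of_isSolvable K M M
    obtain ⟨⟨v, hv⟩, hv0⟩ := exists_ne (0 : LieModule.weightSpace M χ)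
    refine ⟨v, fun h => hv0 (by simpa using h),
      le_lineNormalizer_of_forall_lie_eq_smul fun E hE => ?_⟩
    exact ⟨χ ⟨E, hE⟩, congr_arg Subtype.val ((LieModule.mem_weightSpace _ _).mp hv ⟨E, hE⟩)⟩

end Field

end Derivation

namespace MvPolynomial

variable {σ R : Type*} [CommRing R]

lemma pderiv_ne_zero [Nontrivial R] (i : σ) :
    (pderiv i : Derivation R (MvPolynomial σ R) _) ≠ 0 := by
  intro h
  simpa using congr($h (X i))

instance [Nonempty σ] [Nontrivial R] :
    Nontrivial (Derivation R (MvPolynomial σ R) (MvPolynomial σ R)) :=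
  ⟨⟨pderiv (Classical.arbitrary σ), 0, pderiv_ne_zero _⟩⟩

lemma not_finiteDimensional {K : Type*} [Field K] [Nonempty σ] :
    ¬ FiniteDimensional K (MvPolynomial σ K) := fun _ =>
  Module.finrank_pos.ne' (finrank_eq_zero (σ := σ) (K := K))

/-- Test against `∂ⱼ` and `Xᵢ ∂ⱼ`, where `D Xᵢ ≠ 0` and `j ≠ i`: the difference of the two
conditions is `D Xᵢ • ∂ⱼ ∈ A • D`, which fails at `Xᵢ` and `Xⱼ`. -/
theorem eq_zero_of_lineNormalizer_eq_top [IsDomain R] [Nontrivial σ]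
    {D : Derivation R (MvPolynomial σ R) (MvPolynomial σ R)}
    (h : Derivation.lineNormalizer D = ⊤) : D = 0 := by
  by_contra hD
  obtain ⟨i, hi⟩ : ∃ i, D (X i) ≠ 0 := by
    by_contra! h0
    exact hD (derivation_ext fun i => by simp [h0])
  obtain ⟨j, hji⟩ := exists_ne i
  have hnorm (E : Derivation R (MvPolynomial σ R) (MvPolynomial σ R)) :
      ∃ f, ⁅E, D⁆ = f • D := Derivation.mem_lineNormalizer.mp (h ▸ LieSubalgebra.mem_top E)
  obtain ⟨f, hf⟩ := hnorm (pderiv j)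
  obtain ⟨g, hg⟩ := hnorm ((X i : MvPolynomial σ R) • pderiv j)
  have key : D (X i) • pderiv j = (X i * f - g) • D := by
    rw [Derivation.smul_lie_eq_smul_lie_sub, hf, smul_smul] at hg
    linear_combination (norm := module) -hg
  have hfg : X i * f - g = 0 := by
    simpa [pderiv_X_of_ne hji.symm, hi] using congr($key (X i))
  exact hi (by simpa [hfg] using congr($key (X j)))

end MvPolynomial

theorem finiteDimensional_maximal_subalgebra_not_solvable_general
    {K : Type} [Field K] [IsAlgClosed K] [CharZero K] {n : ℕ} (hn : 2 ≤ n)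
    (M : LieSubalgebra K (Wn K n))
    (hmax : ∀ L : LieSubalgebra K (Wn K n), M < L → L = ⊤)
    (hfd : FiniteDimensional K M) :
    ¬ LieAlgebra.IsSolvable M := by
  intro hsolv
  have : Nontrivial (Fin n) := Fin.nontrivial_iff_two_le.mpr hn
  obtain ⟨D, hD, hMD⟩ := Derivation.exists_ne_zero_le_lineNormalizer M
  have hlt : M < Derivation.lineNormalizer D :=
    lt_of_le_of_ne hMD fun h =>
      Derivation.not_lineNormalizer_le_of_finiteDimensional MvPolynomial.not_finiteDimensional
        hD M h.ge
  exact hD (MvPolynomial.eq_zero_of_lineNormalizer_eq_top (hmax _ hlt))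

/-- Let `n ≥ 2`. A finite-dimensional maximal Lie subalgebra of `Wn` is not solvable. -/
theorem finiteDimensional_maximal_subalgebra_not_solvable
    {K : Type} [Field K] [IsAlgClosed K] [CharZero K] {n : ℕ} (hn : 2 ≤ n)
    (M : LieSubalgebra K (Wn K n)) (hMtop : M ≠ ⊤)
    (hmax : ∀ L : LieSubalgebra K (Wn K n), M < L → L = ⊤)
    (hfd : FiniteDimensional K M) :
    ¬ LieAlgebra.IsSolvable M :=
  finiteDimensional_maximal_subalgebra_not_solvable_general hn M hmax hfd
end

section
/- Let M be a maximal subalgebra of the Lie algebra W_n that is also an A-submodule of W_n (a polynomial subalgebra) and has rank n over A, and let I = { f ∈ A : f·D ∈ M for all D ∈ W_n }. Then I²·W_n = { Σ f_k·D_k : f_k ∈ I², D_k ∈ W_n } is a nonzero proper Lie ideal of M; in particular, M is not a simple Lie algebra. -/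
open MvPolynomial

section Aux
variable {K : Type} [Field K] {n : ℕ}

lemma deriv_sum_apply {ι : Type*} (s : Finset ι) (f : ι → Wn K n)
    (a : MvPolynomial (Fin n) K) : (∑ i ∈ s, f i) a = ∑ i ∈ s, f i a := by
  induction s using Finset.cons_induction with
  | empty => simp
  | cons i s hi ih => simp [Finset.sum_cons, ih]

lemma lie_smul_formula (f : MvPolynomial (Fin n) K) (D E : Wn K n) :
    ⁅D, f • E⁆ = D f • E + f • ⁅D, E⁆ := by
  ext a
  simp only [Derivation.commutator_apply, Derivation.smul_apply, Derivation.add_apply,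
    Derivation.leibniz, smul_eq_mul]
  ring_nf

lemma deriv_basis (D : Wn K n) : D = ∑ i, D (X i) • pderiv i := by
  apply MvPolynomial.derivation_ext
  intro j
  classical
  rw [deriv_sum_apply]
  rw [Finset.sum_eq_single j]
  · simp
  · intro i _ hij
    simp [pderiv_X_of_ne (Ne.symm hij)]
  · simp

end Aux

set_option maxHeartbeats 1000000 in
set_option synthInstance.maxHeartbeats 400000 in
/-- Let `M` be a maximal Lie subalgebra of `Wn` that is an `A`-submodule (a polynomial
subalgebra) of rank `n` over `A`, and let `I = { f ∈ A : f·D ∈ M for all D ∈ Wn }`.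
Then `I²·Wn` is a nonzero proper Lie ideal of `M`; in particular `M` is not simple. -/
theorem sq_ideal_smul_Wn_is_nonzero_proper_lieIdeal
    {K : Type} [Field K] [IsAlgClosed K] [CharZero K] {n : ℕ}
    (M : LieSubalgebra K (Wn K n)) (hMtop : M ≠ ⊤)
    (hmax : ∀ L : LieSubalgebra K (Wn K n), M < L → L = ⊤)
    (hmod : ∀ f : MvPolynomial (Fin n) K, ∀ D ∈ M, f • D ∈ M)
    (hrk : ∃ v : Fin n → Wn K n, (∀ i, v i ∈ M) ∧
      LinearIndependent (MvPolynomial (Fin n) K) v)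
    (I : Ideal (MvPolynomial (Fin n) K))
    (hI : ∀ f : MvPolynomial (Fin n) K, f ∈ I ↔ ∀ D : Wn K n, f • D ∈ M) :
    (∀ T ∈ (I ^ 2 • (⊤ : Submodule (MvPolynomial (Fin n) K) (Wn K n))), T ∈ M) ∧
    (I ^ 2 • (⊤ : Submodule (MvPolynomial (Fin n) K) (Wn K n)) ≠ ⊥) ∧
    (∃ T ∈ M, T ∉ (I ^ 2 • (⊤ : Submodule (MvPolynomial (Fin n) K) (Wn K n)))) ∧
    (∀ D ∈ M, ∀ T ∈ (I ^ 2 • (⊤ : Submodule (MvPolynomial (Fin n) K) (Wn K n))),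
      ⁅D, T⁆ ∈ (I ^ 2 • (⊤ : Submodule (MvPolynomial (Fin n) K) (Wn K n)))) ∧
    ¬ LieAlgebra.IsSimple K M := by
  classical
  set A := MvPolynomial (Fin n) K with hAdef
  set S : Submodule A (Wn K n) := I ^ 2 • ⊤ with hSdef
  -- n is positive
  have hn : 0 < n := by
    rcases Nat.eq_zero_or_pos n with h | h
    · exfalso
      apply hMtop
      subst h
      ext D
      simp only [LieSubalgebra.mem_top, iff_true]
      have hD : D = 0 := MvPolynomial.derivation_ext (fun i => i.elim0)
      rw [hD]; exact M.zero_mem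
    · exact h
  set i0 : Fin n := ⟨0, hn⟩ with hi0def
  -- derivatives of elements of I by elements of M stay in I
  have hDfI : ∀ f ∈ I, ∀ D ∈ M, D f ∈ I := by
    intro f hf D hD
    rw [hI]
    intro E
    have h1 : ⁅D, f • E⁆ ∈ M := M.lie_mem hD ((hI f).1 hf E)
    have h2 : f • ⁅D, E⁆ ∈ M := (hI f).1 hf _
    have heq : D f • E = ⁅D, f • E⁆ - f • ⁅D, E⁆ := by
      rw [lie_smul_formula]; abel
    rw [heq]
    exact M.sub_mem h1 h2
  -- I^2 is stable under derivations from M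
  have hDI2 : ∀ D ∈ M, ∀ r ∈ I ^ 2, D r ∈ I ^ 2 := by
    intro D hD r hr
    rw [pow_two] at hr ⊢
    refine Submodule.mul_induction_on hr (fun f hf g hg => ?_) (fun x y hx hy => ?_)
    · rw [Derivation.leibniz, smul_eq_mul, smul_eq_mul]
      exact add_mem (Ideal.mul_mem_mul hf (hDfI g hg D hD))
        (Ideal.mul_mem_mul hg (hDfI f hf D hD))
    · rw [map_add]; exact add_mem hx hy
  -- item 1: S ⊆ M
  have item1 : ∀ T ∈ S, T ∈ M := by
    intro T hT
    refine Submodule.smul_induction_on hT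
      (fun r hr m _ => (hI r).1 (Ideal.pow_le_self two_ne_zero hr) m)
      (fun x y hx hy => M.add_mem hx hy)
  -- item 4: S is a Lie ideal of M
  have item4 : ∀ D ∈ M, ∀ T ∈ S, ⁅D, T⁆ ∈ S := by
    intro D hD T hT
    refine Submodule.smul_induction_on (p := fun T => ⁅D, T⁆ ∈ S) hT
      (fun r hr m _ => ?_) (fun x y hx hy => ?_)
    · show ⁅D, r • m⁆ ∈ S
      rw [lie_smul_formula]
      exact Submodule.add_mem _ (Submodule.smul_mem_smul (hDI2 D hD r hr) trivial)
        (Submodule.smul_mem_smul hr trivial)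
    · show ⁅D, x + y⁆ ∈ S
      have hxy : ⁅D, x + y⁆ = ⁅D, x⁆ + ⁅D, y⁆ := lie_add D x y
      rw [hxy]; exact Submodule.add_mem _ hx hy
  -- the coordinate linear map
  let φ : Wn K n →ₗ[A] (Fin n → A) :=
    { toFun := fun D i => D (X i)
      map_add' := fun D E => by ext i; simp
      map_smul' := fun f D => by ext i; simp }
  have hφinj : Function.Injective φ := by
    intro D E h
    exact MvPolynomial.derivation_ext (fun i => congrFun h i)
  -- rank argument: for every D there is f ≠ 0 with f•D ∈ M
  have hdep : ∀ D : Wn K n, ∃ f : A, f ≠ 0 ∧ f • D ∈ M := by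
    intro D
    obtain ⟨v, hvM, hvli⟩ := hrk
    have hnot : ¬ LinearIndependent A (Fin.cons D v : Fin (n + 1) → Wn K n) := by
      intro hli
      have hcard := (hli.map' φ (LinearMap.ker_eq_bot_of_injective hφinj)).fintype_card_le_finrank
      rw [Module.finrank_fintype_fun_eq_card] at hcard
      simp at hcard
    rw [Fintype.not_linearIndependent_iff] at hnot
    obtain ⟨g, hsum, j, hj⟩ := hnot
    rw [Fin.sum_univ_succ] at hsum
    simp only [Fin.cons_zero, Fin.cons_succ] at hsum
    by_cases h0 : g 0 = 0
    · exfalso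
      rw [h0, zero_smul, zero_add] at hsum
      have hall := Fintype.linearIndependent_iff.mp hvli (fun i => g i.succ) hsum
      obtain ⟨j', rfl⟩ := Fin.eq_succ_of_ne_zero
        (show j ≠ 0 from fun hj0 => hj (by rw [hj0]; exact h0))
      exact hj (hall j')
    · refine ⟨g 0, h0, ?_⟩
      have heq : g 0 • D = -∑ i : Fin n, g i.succ • v i :=
        eq_neg_of_add_eq_zero_left hsum
      rw [heq]
      have hmem : (∑ i : Fin n, g i.succ • v i) ∈ M :=
        M.toSubmodule.sum_mem (fun i _ => hmod _ _ (hvM i))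
      exact M.toSubmodule.neg_mem hmem
  -- a nonzero element of I
  have hIF : ∃ F : A, F ≠ 0 ∧ F ∈ I := by
    choose f hf0 hfM using fun i : Fin n => hdep (pderiv i)
    refine ⟨∏ i, f i, Finset.prod_ne_zero_iff.2 (fun i _ => hf0 i), ?_⟩
    rw [hI]
    intro D
    have hpd : ∀ i : Fin n, (∏ j, f j) • (pderiv i : Wn K n) ∈ M := by
      intro i
      rw [← Finset.mul_prod_erase Finset.univ f (Finset.mem_univ i), mul_comm, ← smul_smul]
      exact hmod _ _ (hfM i)
    have hdec : (∏ j, f j) • D = ∑ i, D (X i) • ((∏ j, f j) • (pderiv i : Wn K n)) := by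
      conv_lhs => rw [deriv_basis D]
      rw [Finset.smul_sum]
      refine Finset.sum_congr rfl (fun i _ => ?_)
      rw [smul_smul, smul_smul, mul_comm]
    rw [hdec]
    exact M.toSubmodule.sum_mem (fun i _ => hmod _ _ (hpd i))
  obtain ⟨F, hF0, hFI⟩ := hIF
  -- I is a proper ideal
  have hItop : I ≠ ⊤ := by
    intro h
    apply hMtop
    ext D
    simp only [LieSubalgebra.mem_top, iff_true]
    have := (hI 1).1 (h ▸ Submodule.mem_top) D
    rwa [one_smul] at this
  -- item 2: S ≠ ⊥
  have hFS : (F ^ 2) • (pderiv i0 : Wn K n) ∈ S :=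
    Submodule.smul_mem_smul (Ideal.pow_mem_pow hFI 2) trivial
  have hFne : (F ^ 2) • (pderiv i0 : Wn K n) ≠ 0 := by
    intro h
    have h2 := DFunLike.congr_fun h (X i0)
    simp only [Derivation.smul_apply, pderiv_X_self, smul_eq_mul, mul_one,
      Derivation.zero_apply] at h2
    exact pow_ne_zero 2 hF0 h2
  have item2 : S ≠ ⊥ := by
    intro h
    rw [h, Submodule.mem_bot] at hFS
    exact hFne hFS
  -- item 3: S ≠ M as sets
  have item3 : ∃ T ∈ M, T ∉ S := by
    by_contra hcon
    push_neg at hcon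
    have hcoeff : ∀ T ∈ S, ∀ i : Fin n, T (X i) ∈ I ^ 2 := by
      intro T hT
      refine Submodule.smul_induction_on (p := fun T => ∀ i : Fin n, T (X i) ∈ I ^ 2) hT
        (fun r hr m _ i => ?_) (fun x y hx hy i => ?_)
      · rw [Derivation.smul_apply, smul_eq_mul]
        exact Ideal.mul_mem_right _ _ hr
      · rw [Derivation.add_apply]; exact add_mem (hx i) (hy i)
    have hle : I ≤ I ^ 2 := by
      intro f hf
      have h1 : f • (pderiv i0 : Wn K n) ∈ S := hcon _ ((hI f).1 hf _)
      have h2 := hcoeff _ h1 i0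
      simpa using h2
    obtain ⟨r, hr1, hr0⟩ := Submodule.exists_sub_one_mem_and_smul_eq_zero_of_fg_of_le_smul
      I (I : Submodule A A) (IsNoetherian.noetherian _)
      (by rwa [Ideal.smul_eq_mul, ← pow_two])
    have hrF : r * F = 0 := by
      have := hr0 F hFI
      rwa [smul_eq_mul] at this
    rcases mul_eq_zero.1 hrF with hr | hF
    · rw [hr, zero_sub] at hr1
      exact hItop ((Ideal.eq_top_iff_one I).2 (by simpa using I.neg_mem hr1))
    · exact hF0 hF
  -- item 5: M is not simple
  have item5 : ¬ LieAlgebra.IsSimple K M := by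
    intro hsimple
    let J : LieIdeal K M :=
      { carrier := {m : M | (m : Wn K n) ∈ S}
        add_mem' := fun {x y} hx hy => by
          simp only [Set.mem_setOf_eq] at *
          rw [AddMemClass.coe_add]
          exact S.add_mem hx hy
        zero_mem' := by
          simp only [Set.mem_setOf_eq, ZeroMemClass.coe_zero]
          exact S.zero_mem
        smul_mem' := fun k x hx => by
          simp only [Set.mem_setOf_eq] at *
          have hcoe : ((k • x : M) : Wn K n) = k • (x : Wn K n) := rfl
          rw [hcoe, ← algebraMap_smul A k (x : Wn K n)]
          exact S.smul_mem _ hx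
        lie_mem := fun {x m} hm => by
          simp only [Set.mem_setOf_eq] at *
          rw [LieSubalgebra.coe_bracket]
          exact item4 _ x.2 _ hm }
    have memJ : ∀ x : M, x ∈ J ↔ (x : Wn K n) ∈ S := fun x => Iff.rfl
    rcases hsimple.eq_bot_or_eq_top J with hbot | htop
    · have he : (⟨(F ^ 2) • (pderiv i0 : Wn K n), item1 _ hFS⟩ : M) ∈ J := (memJ _).2 hFS
      rw [hbot, LieSubmodule.mem_bot] at he
      apply hFne
      exact congrArg Subtype.val he
    · obtain ⟨T, hTM, hTS⟩ := item3
      have hT2 : (⟨T, hTM⟩ : M) ∈ J := by rw [htop]; trivial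
      exact hTS ((memJ _).1 hT2)
  exact ⟨item1, item2, item3, item4, item5⟩
end
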